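/- Let Λ(s) = s²/2 + log(2Φ(s)), Λ*(y) = sup_{s∈ℝ}(sy − Λ(s)), and for γ ∈ (0,1) let ξ_γ(y) = ((1−γ)/γ)·y²/2 + Λ*(y), with unique minimizer y_γ ∈ (0, √(2/π)). Then as γ → 0⁺: (i) y_γ / √(γ/(1−γ)) → 1, and (ii) ξ_γ(y_γ) / ((1/2)·log((1−γ)/γ)) → 1. -/

import Mathlib

/-- The standard normal cumulative distribution function. -/
noncomputable def Phi (s : ℝ) : ℝ :=
  (1 / Real.sqrt (2 * Real.pi)) * ∫ t in Set.Iic s, Real.exp (-t ^ 2 / 2)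

/-- The cumulant generating function of a standard half-normal random variable. -/
noncomputable def Lam (s : ℝ) : ℝ := s ^ 2 / 2 + Real.log (2 * Phi s)

/-- The Legendre transform (large deviation rate function) of `Lam`. -/
noncomputable def LamStar (y : ℝ) : ℝ := ⨆ s : ℝ, (s * y - Lam s)

/-- `ξ_γ(y) = ((1-γ)/γ)·y²/2 + Λ*(y)`. -/
noncomputable def xiFn (γ y : ℝ) : ℝ := ((1 - γ) / γ) * y ^ 2 / 2 + LamStar y

/-!
Mills' ratio bounds `t / (1 + t²) · e^{-t²/2} ≤ ∫_t^∞ e^{-x²/2} dx ≤ e^{-t²/2} / t` give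
`Λ(-t) = log (2/√(2π)) - log t + O(1/t²)` as `t → ∞`, hence `Λ*(y) = -log y + C + o(1)` as
`y → 0⁺`; the lower bound `Λ*(y) ≥ -log y + C` (take `s = -1/y`) even holds for every `y > 0`.

Put `s_γ = √(γ/(1-γ))`, so that `(1-γ)/γ = s_γ⁻²`, and `u = y_γ / s_γ`. Since `log u ≤ u - 1`,
the lower bound gives `ξ_γ(y_γ) ≥ (u - 1)²/2 + 1/2 - log s_γ + C`, while minimality against
`ξ_γ(s_γ) = 1/2 + Λ*(s_γ)` gives `ξ_γ(y_γ) ≤ 1/2 - log s_γ + C + o(1)`. Hence `u → 1` and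
`ξ_γ(y_γ) = ½ log ((1-γ)/γ) + O(1)`.
-/

open Real MeasureTheory Set Filter Topology

noncomputable def gaussTail (t : ℝ) : ℝ := ∫ x in Ioi t, exp (-x ^ 2 / 2)

lemma integrable_exp_neg_sq_div_two : Integrable fun x : ℝ => exp (-x ^ 2 / 2) := by
  simpa [neg_div, div_eq_inv_mul] using integrable_exp_neg_mul_sq (b := 1 / 2) (by norm_num)

lemma integrable_mul_exp_neg_sq_div_two : Integrable fun x : ℝ => x * exp (-x ^ 2 / 2) := by
  simpa [neg_div, div_eq_inv_mul] using
    integrable_rpow_mul_exp_neg_mul_sq (b := 1 / 2) (by norm_num) (s := 1) (by norm_num)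

lemma hasDerivAt_exp_neg_sq_div_two (x : ℝ) :
    HasDerivAt (fun x : ℝ => exp (-x ^ 2 / 2)) (-x * exp (-x ^ 2 / 2)) x := by
  have h : HasDerivAt (fun x : ℝ => -x ^ 2 / 2) (-x) x :=
    ((hasDerivAt_pow 2 x).neg.div_const 2).congr_deriv (by ring)
  simpa [mul_comm] using h.exp

lemma tendsto_exp_neg_sq_div_two_atTop : Tendsto (fun x : ℝ => exp (-x ^ 2 / 2)) atTop (𝓝 0) :=
  tendsto_exp_atBot.comp <|
    (tendsto_neg_atTop_atBot.comp (tendsto_pow_atTop two_ne_zero)).atBot_div_const two_pos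

lemma integral_Ioi_mul_exp_neg_sq_div_two (t : ℝ) :
    ∫ x in Ioi t, x * exp (-x ^ 2 / 2) = exp (-t ^ 2 / 2) := by
  have := integral_Ioi_of_hasDerivAt_of_tendsto' (a := t)
    (fun x _ => ((hasDerivAt_exp_neg_sq_div_two x).neg.congr_deriv (by ring)))
    integrable_mul_exp_neg_sq_div_two.integrableOn tendsto_exp_neg_sq_div_two_atTop.neg
  simpa using this

lemma gaussTail_le_exp_div {t : ℝ} (ht : 0 < t) : gaussTail t ≤ exp (-t ^ 2 / 2) / t := by
  calc gaussTail t ≤ ∫ x in Ioi t, t⁻¹ * (x * exp (-x ^ 2 / 2)) := by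
        refine setIntegral_mono_on integrable_exp_neg_sq_div_two.integrableOn
          (integrable_mul_exp_neg_sq_div_two.integrableOn.const_mul _) measurableSet_Ioi
          fun x (hx : t < x) => ?_
        rw [← mul_assoc]
        exact le_mul_of_one_le_left (exp_pos _).le ((one_le_inv_mul₀ ht).2 hx.le)
    _ = exp (-t ^ 2 / 2) / t := by
        rw [integral_const_mul, integral_Ioi_mul_exp_neg_sq_div_two, inv_mul_eq_div]

/-- The lower Mills bound comes from this antiderivative: its derivative is at most `e^{-x²/2}`. -/
lemma hasDerivAt_neg_div_one_add_sq_mul_exp (x : ℝ) :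
    HasDerivAt (fun x : ℝ => -(x / (1 + x ^ 2) * exp (-x ^ 2 / 2)))
      (exp (-x ^ 2 / 2) * ((x ^ 4 + 2 * x ^ 2 - 1) / (1 + x ^ 2) ^ 2)) x := by
  have hne : 1 + x ^ 2 ≠ 0 := by positivity
  have h1 : HasDerivAt (fun x : ℝ => 1 + x ^ 2) (2 * x) x := by
    simpa using (hasDerivAt_pow 2 x).const_add 1
  have h2 := ((hasDerivAt_id x).div h1 hne).mul (hasDerivAt_exp_neg_sq_div_two x)
  exact h2.neg.congr_deriv (by simp only [Pi.div_apply, id]; field_simp; ring)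

lemma div_one_add_sq_mul_exp_le_gaussTail (t : ℝ) :
    t / (1 + t ^ 2) * exp (-t ^ 2 / 2) ≤ gaussTail t := by
  set g : ℝ → ℝ := fun x => exp (-x ^ 2 / 2) * ((x ^ 4 + 2 * x ^ 2 - 1) / (1 + x ^ 2) ^ 2)
  have hfactor : ∀ x : ℝ, |(x ^ 4 + 2 * x ^ 2 - 1) / (1 + x ^ 2) ^ 2| ≤ 1 := fun x => by
    rw [abs_div, abs_of_pos (by positivity : (0 : ℝ) < (1 + x ^ 2) ^ 2),
      div_le_one (by positivity), abs_le]
    constructor <;> nlinarith [sq_nonneg x, sq_nonneg (x ^ 2)]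
  have hg_le : ∀ x, g x ≤ exp (-x ^ 2 / 2) := fun x =>
    mul_le_of_le_one_right (exp_pos _).le (abs_le.1 (hfactor x)).2
  have hg : Integrable g := by
    refine integrable_exp_neg_sq_div_two.mono' (by fun_prop (disch := positivity))
      (Eventually.of_forall fun x => ?_)
    rw [norm_mul, norm_of_nonneg (exp_pos _).le]
    exact mul_le_of_le_one_right (exp_pos _).le (hfactor x)
  have hlim : Tendsto (fun x : ℝ => -(x / (1 + x ^ 2) * exp (-x ^ 2 / 2))) atTop (𝓝 0) := by
    have h : Tendsto (fun x : ℝ => x / (1 + x ^ 2)) atTop (𝓝 0) := by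
      refine tendsto_of_tendsto_of_tendsto_of_le_of_le' tendsto_const_nhds
        tendsto_inv_atTop_zero ?_ ?_ <;> filter_upwards [eventually_gt_atTop 0] with x hx
      · positivity
      · rw [div_le_iff₀ (by positivity), inv_mul_eq_div, le_div_iff₀ hx]
        nlinarith
    simpa using (h.mul tendsto_exp_neg_sq_div_two_atTop).neg
  have heq := integral_Ioi_of_hasDerivAt_of_tendsto' (a := t)
    (fun x _ => hasDerivAt_neg_div_one_add_sq_mul_exp x) hg.integrableOn hlim
  calc t / (1 + t ^ 2) * exp (-t ^ 2 / 2) = ∫ x in Ioi t, g x := by rw [heq]; ring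
    _ ≤ gaussTail t := setIntegral_mono hg.integrableOn
          integrable_exp_neg_sq_div_two.integrableOn hg_le

lemma Phi_neg (t : ℝ) : Phi (-t) = gaussTail t / √(2 * π) := by
  rw [Phi, gaussTail, ← integral_comp_neg_Ioi, one_div_mul_eq_div]
  simp only [neg_sq]

lemma Phi_zero : Phi 0 = 1 / 2 := by
  have h := integral_gaussian_Ioi (1 / 2)
  rw [show π / (1 / 2) = 2 * π by ring] at h
  have h' : gaussTail 0 = √(2 * π) / 2 := by
    rw [gaussTail, ← h]
    congr with x
    ring_nf
  rw [← neg_zero, Phi_neg, h']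
  field_simp

lemma Phi_pos (s : ℝ) : 0 < Phi s := by
  unfold Phi
  apply mul_pos (by positivity)
  rw [setIntegral_pos_iff_support_of_nonneg_ae
    (Eventually.of_forall fun x => (exp_pos _).le) integrable_exp_neg_sq_div_two.integrableOn]
  simp [Function.support, exp_ne_zero]

lemma Phi_mono : Monotone Phi := fun a b hab =>
  mul_le_mul_of_nonneg_left (setIntegral_mono_set integrable_exp_neg_sq_div_two.integrableOn
    (Eventually.of_forall fun x => (exp_pos _).le) (Iic_subset_Iic.2 hab).eventuallyLE)
    (by positivity)

lemma two_mul_Phi_neg (t : ℝ) : 2 * Phi (-t) = 2 / √(2 * π) * gaussTail t := by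
  rw [Phi_neg]; ring

lemma Lam_neg_le {t : ℝ} (ht : 0 < t) : Lam (-t) ≤ log (2 / √(2 * π)) - log t := by
  have h := log_le_log (by linarith [Phi_pos (-t)]) <| (two_mul_Phi_neg t).trans_le <|
    mul_le_mul_of_nonneg_left (gaussTail_le_exp_div ht) (by positivity)
  rw [log_mul (x := 2 / √(2 * π)) (by positivity) (by positivity), log_div (exp_ne_zero _) ht.ne',
    log_exp] at h
  rw [Lam, neg_sq]
  linarith

lemma Lam_neg_ge {t : ℝ} (ht : 0 < t) :
    log (2 / √(2 * π)) + log t - log (1 + t ^ 2) ≤ Lam (-t) := by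
  have h := log_le_log (by positivity) <| (mul_le_mul_of_nonneg_left
    (div_one_add_sq_mul_exp_le_gaussTail t) (by positivity)).trans_eq (two_mul_Phi_neg t).symm
  rw [log_mul (x := 2 / √(2 * π)) (by positivity) (by positivity),
    log_mul (by positivity) (exp_ne_zero _), log_div ht.ne' (by positivity), log_exp] at h
  rw [Lam, neg_sq]
  linarith

/-- The constant `C` in `Λ*(y) = -log y + C + o(1)` as `y → 0⁺`. -/
noncomputable def lamStarConst : ℝ := -1 - log (2 / √(2 * π))

lemma mul_sub_Lam_le_of_nonneg {s : ℝ} (hs : 0 ≤ s) (y : ℝ) : s * y - Lam s ≤ y ^ 2 / 2 := by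
  have : 0 ≤ log (2 * Phi s) := log_nonneg (by linarith [Phi_mono hs, Phi_zero])
  rw [Lam]
  nlinarith [sq_nonneg (s - y)]

lemma mul_sub_Lam_le_of_neg_le {s T y : ℝ} (hTs : -T ≤ s) (hs : s ≤ 0) (hy : 0 ≤ y) :
    s * y - Lam s ≤ -log (2 * Phi (-T)) := by
  have := log_le_log (by linarith [Phi_pos (-T)])
    (by linarith [Phi_mono hTs] : 2 * Phi (-T) ≤ 2 * Phi s)
  rw [Lam]
  linarith [sq_nonneg s, mul_nonpos_of_nonpos_of_nonneg hs hy]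

lemma neg_mul_sub_Lam_neg_le {t y : ℝ} (ht : 0 < t) (hy : 0 < y) :
    -t * y - Lam (-t) ≤ -log y + lamStarConst + 1 / t ^ 2 := by
  have hlog_one_add : log (1 + t ^ 2) ≤ 2 * log t + 1 / t ^ 2 := by
    rw [show 1 + t ^ 2 = t ^ 2 * (1 + 1 / t ^ 2) by field_simp; ring,
      log_mul (by positivity) (by positivity), log_pow]
    push_cast
    linarith [log_le_sub_one_of_pos (by positivity : 0 < 1 + 1 / t ^ 2)]
  have hlog_mul : log t + log y ≤ t * y - 1 := by
    rw [← log_mul ht.ne' hy.ne']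
    exact log_le_sub_one_of_pos (mul_pos ht hy)
  rw [lamStarConst]
  linarith [Lam_neg_ge ht]

lemma mul_sub_Lam_le {T y : ℝ} (hT : 0 < T) (hy : 0 < y) (s : ℝ) :
    s * y - Lam s ≤
      max (max (y ^ 2 / 2) (-log (2 * Phi (-T)))) (-log y + lamStarConst + 1 / T ^ 2) := by
  rcases le_or_gt 0 s with hs | hs
  · exact le_max_of_le_left (le_max_of_le_left (mul_sub_Lam_le_of_nonneg hs y))
  rcases le_or_gt (-T) s with hTs | hTs
  · exact le_max_of_le_left (le_max_of_le_right (mul_sub_Lam_le_of_neg_le hTs hs.le hy.le))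
  refine le_max_of_le_right ?_
  have h := neg_mul_sub_Lam_neg_le (t := -s) (by linarith) hy
  have : 1 / (-s) ^ 2 ≤ 1 / T ^ 2 := one_div_le_one_div_of_le (by positivity) (by nlinarith)
  rw [neg_neg] at h
  linarith

lemma LamStar_le {T y : ℝ} (hT : 0 < T) (hy : 0 < y) :
    LamStar y ≤
      max (max (y ^ 2 / 2) (-log (2 * Phi (-T)))) (-log y + lamStarConst + 1 / T ^ 2) :=
  ciSup_le (mul_sub_Lam_le hT hy)

lemma le_LamStar {y : ℝ} (hy : 0 < y) : -log y + lamStarConst ≤ LamStar y := by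
  refine le_ciSup_of_le ⟨_, forall_mem_range.2 (mul_sub_Lam_le one_pos hy)⟩ (-y⁻¹) ?_
  have h := Lam_neg_le (inv_pos.2 hy)
  rw [log_inv] at h
  rw [neg_mul, inv_mul_cancel₀ hy.ne', lamStarConst]
  linarith

lemma eventually_LamStar_le {ε : ℝ} (hε : 0 < ε) :
    ∀ᶠ y in 𝓝[>] 0, LamStar y ≤ -log y + lamStarConst + ε := by
  set T := (√ε)⁻¹
  have hT : 0 < T := inv_pos.2 (sqrt_pos.2 hε)
  have hTε : 1 / T ^ 2 = ε := by simp [T, sq_sqrt hε.le]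
  have hlog : Tendsto (fun y => -log y) (𝓝[>] 0) atTop :=
    tendsto_neg_atBot_atTop.comp tendsto_log_nhdsGT_zero
  filter_upwards [Ioo_mem_nhdsGT one_pos, hlog.eventually_ge_atTop
    (max (1 / 2) (-log (2 * Phi (-T))) - lamStarConst - ε)] with y hy hlogy
  have hmax := max_le_iff.1 (sub_le_iff_le_add.1 (sub_le_iff_le_add.1 hlogy))
  refine (LamStar_le hT hy.1).trans (max_le (max_le ?_ ?_) (by rw [hTε]))
  · nlinarith [hy.1, hy.2]
  · linarith

lemma half_add_sq_div_sub_one_le {s y : ℝ} (hs : 0 < s) (hy : 0 < y) :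
    (y / s - 1) ^ 2 / 2 + 1 / 2 - log s ≤ (s ^ 2)⁻¹ * y ^ 2 / 2 - log y := by
  have h := log_le_sub_one_of_pos (div_pos hy hs)
  rw [log_div hy.ne' hs.ne'] at h
  rw [show (s ^ 2)⁻¹ * y ^ 2 = (y / s) ^ 2 by field_simp]
  nlinarith

lemma sqrt_div_one_sub_pos {γ : ℝ} (hγ : γ ∈ Ioo 0 1) : 0 < √(γ / (1 - γ)) :=
  sqrt_pos.2 (div_pos hγ.1 (sub_pos.2 hγ.2))

lemma one_sub_div_eq_inv_sq_sqrt {γ : ℝ} (hγ : γ ∈ Ioo 0 1) :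
    (1 - γ) / γ = (√(γ / (1 - γ)) ^ 2)⁻¹ := by
  rw [sq_sqrt (div_nonneg hγ.1.le (sub_nonneg.2 hγ.2.le)), inv_div]

lemma half_mul_log_one_sub_div {γ : ℝ} (hγ : γ ∈ Ioo 0 1) :
    1 / 2 * log ((1 - γ) / γ) = -log √(γ / (1 - γ)) := by
  rw [log_sqrt (div_nonneg hγ.1.le (sub_nonneg.2 hγ.2.le)), ← inv_div γ, log_inv]
  ring

lemma xiFn_sqrt_div_one_sub {γ : ℝ} (hγ : γ ∈ Ioo 0 1) :
    xiFn γ √(γ / (1 - γ)) = 1 / 2 + LamStar √(γ / (1 - γ)) := by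
  rw [xiFn, one_sub_div_eq_inv_sq_sqrt hγ,
    inv_mul_cancel₀ (pow_pos (sqrt_div_one_sub_pos hγ) 2).ne']

lemma le_xiFn {γ y : ℝ} (hγ : γ ∈ Ioo 0 1) (hy : 0 < y) :
    (y / √(γ / (1 - γ)) - 1) ^ 2 / 2 + 1 / 2 - log √(γ / (1 - γ)) + lamStarConst ≤ xiFn γ y := by
  have := half_add_sq_div_sub_one_le (sqrt_div_one_sub_pos hγ) hy
  rw [xiFn, one_sub_div_eq_inv_sq_sqrt hγ]
  linarith [le_LamStar hy]

lemma tendsto_sqrt_div_one_sub :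
    Tendsto (fun γ : ℝ => √(γ / (1 - γ))) (𝓝[Ioo 0 1] 0) (𝓝[>] 0) := by
  refine tendsto_nhdsWithin_iff.2 ⟨?_, eventually_mem_nhdsWithin.mono
    fun γ hγ => sqrt_div_one_sub_pos hγ⟩
  have : ContinuousAt (fun γ : ℝ => √(γ / (1 - γ))) 0 := by fun_prop (disch := norm_num)
  simpa using this.tendsto.mono_left nhdsWithin_le_nhds

lemma tendsto_xiFn_add_log_sqrt {y : ℝ → ℝ} (hpos : ∀ γ ∈ Ioo 0 1, 0 < y γ)
    (hmin : ∀ γ ∈ Ioo 0 1, ∀ t ∈ Ioi 0, xiFn γ (y γ) ≤ xiFn γ t) :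
    Tendsto (fun γ => xiFn γ (y γ) + log √(γ / (1 - γ))) (𝓝[Ioo 0 1] 0)
      (𝓝 (1 / 2 + lamStarConst)) := by
  refine tendsto_order.2 ⟨fun a ha => ?_, fun a ha => ?_⟩
  · filter_upwards [self_mem_nhdsWithin] with γ hγ
    linarith [le_xiFn hγ (hpos γ hγ), sq_nonneg (y γ / √(γ / (1 - γ)) - 1)]
  · filter_upwards [self_mem_nhdsWithin, tendsto_sqrt_div_one_sub.eventually
      (eventually_LamStar_le (half_pos (sub_pos.2 ha)))] with γ hγ hLamStar
    have := hmin γ hγ _ (sqrt_div_one_sub_pos hγ)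
    rw [xiFn_sqrt_div_one_sub hγ] at this
    linarith

theorem stmt_18 (y : ℝ → ℝ)
    -- for each γ ∈ (0,1), `y γ` is the minimizer of `ξ_γ` on (0,∞),
    -- lying in (0, √(2/π))
    (hy : ∀ γ ∈ Set.Ioo (0:ℝ) 1,
      y γ ∈ Set.Ioo (0:ℝ) (Real.sqrt (2 / Real.pi)) ∧
      ∀ t ∈ Set.Ioi (0:ℝ), xiFn γ (y γ) ≤ xiFn γ t) :
    Filter.Tendsto (fun γ => y γ / Real.sqrt (γ / (1 - γ)))
      (nhdsWithin 0 (Set.Ioo (0:ℝ) 1)) (nhds 1) ∧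
    Filter.Tendsto (fun γ => xiFn γ (y γ) / ((1 / 2) * Real.log ((1 - γ) / γ)))
      (nhdsWithin 0 (Set.Ioo (0:ℝ) 1)) (nhds 1) := by
  have hpos : ∀ γ ∈ Ioo (0 : ℝ) 1, 0 < y γ := fun γ hγ => (hy γ hγ).1.1
  have hξ := tendsto_xiFn_add_log_sqrt hpos fun γ hγ => (hy γ hγ).2
  constructor
  · have h := ((hξ.sub_const (1 / 2 + lamStarConst)).const_mul 2).sqrt
    rw [sub_self, mul_zero, sqrt_zero] at h
    rw [← tendsto_sub_nhds_zero_iff]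
    refine squeeze_zero_norm' ?_ h
    filter_upwards [self_mem_nhdsWithin] with γ hγ
    exact abs_le_sqrt (by linarith [le_xiFn hγ (hpos γ hγ)])
  · have hlog : Tendsto (fun γ => -log √(γ / (1 - γ))) (𝓝[Ioo 0 1] 0) atTop :=
      tendsto_neg_atBot_atTop.comp (tendsto_log_nhdsGT_zero.comp tendsto_sqrt_div_one_sub)
    have h := tendsto_const_nhds (x := (1 : ℝ)).add (hξ.div_atTop hlog)
    rw [add_zero] at h
    refine h.congr' ?_
    filter_upwards [self_mem_nhdsWithin, hlog.eventually_gt_atTop 0] with γ hγ hlog_pos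
    have : log √(γ / (1 - γ)) ≠ 0 := (neg_pos.1 hlog_pos).ne
    rw [half_mul_log_one_sub_div hγ]
    field_simp
    ring
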